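/- Let N be a normal subgroup of a finite group G, U an F(G/N)-module, V an F N-module, and W = U ⊕ Ind_N^G V (char F ∤ |G|). Then the image of the Hilbert ideal S(W)_+^G S(W) under the natural N-equivariant projection π : S(W) → S(U ⊕ V) equals the ideal of S(U)⊗S(V) generated by S(U)_+^{G/N} and S(V)_+^N. -/

import Mathlib

noncomputable section
open MvPolynomial

variable {F : Type} [Field F]

/-- The algebra homomorphism between polynomial algebras (viewed as symmetric algebras)
induced by a linear map between the spaces of variables (the degree one components). -/
noncomputable def algOf {α β : Type} [Fintype α] [Fintype β] [DecidableEq α]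
    (f : (α → F) →ₗ[F] (β → F)) :
    MvPolynomial α F →ₐ[F] MvPolynomial β F :=
  aeval fun j => ∑ i, f (Pi.single j 1) i • X i

/-- The embedding of the space of linear forms into the polynomial algebra. -/
noncomputable def lin {β : Type} [Fintype β] (w : β → F) : MvPolynomial β F :=
  ∑ i, w i • X i

/-- The subalgebra of `G`-invariants of the symmetric algebra of a representation. -/
def invariants {G : Type} [Group G] {α : Type} [Fintype α] [DecidableEq α]
    (ρ : Representation F G (α → F)) : Subalgebra F (MvPolynomial α F) where
  carrier := {p | ∀ g : G, algOf (ρ g) p = p}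
  mul_mem' := fun ha hb g => by rw [map_mul, ha g, hb g]
  add_mem' := fun ha hb g => by rw [map_add, ha g, hb g]
  algebraMap_mem' := fun r g => (algOf (ρ g)).commutes r

variable {G : Type} [Group G] {α : Type} [Fintype α] [DecidableEq α]

/-- The invariant ring is generated as an `F`-algebra in degrees at most `d`. -/
def genLE (ρ : Representation F G (α → F)) (d : ℕ) : Prop :=
  Algebra.adjoin F {p : MvPolynomial α F | p ∈ invariants ρ ∧ p.totalDegree ≤ d}
    = invariants ρ

/-- The Noether number `β(G,W)` of a representation. -/
def noether (ρ : Representation F G (α → F)) : ℕ := sInf {d | genLE ρ d}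

/-- The Hilbert ideal: the ideal of `S(W)` generated by the invariants of positive degree. -/
def hilbertIdeal (ρ : Representation F G (α → F)) : Ideal (MvPolynomial α F) :=
  Ideal.span {p | p ∈ invariants ρ ∧ constantCoeff p = 0}

/-- `b(G,W)`: the top degree of the algebra of coinvariants `S(W)/S(W)₊^G S(W)`. -/
def coinvTop (ρ : Representation F G (α → F)) : ℕ :=
  sSup {d | ∃ p : MvPolynomial α F, p.IsHomogeneous d ∧ p ∉ hilbertIdeal ρ}

/-- `b_k(G,W)`: the top degree of `S(W)/((S(W)₊^G)^k S(W))`. -/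
def coinvTopK (ρ : Representation F G (α → F)) (k : ℕ) : ℕ :=
  sSup {d | ∃ p : MvPolynomial α F, p.IsHomogeneous d ∧ p ∉ (hilbertIdeal ρ) ^ k}

/-- The span of all products of `k` positive-degree invariants,
i.e. `(S(W)₊^G)^k` computed inside the invariant ring. -/
def prodPow (ρ : Representation F G (α → F)) (k : ℕ) : Submodule F (MvPolynomial α F) :=
  Submodule.span F {x | ∃ f : Fin k → MvPolynomial α F,
    (∀ i, f i ∈ invariants ρ ∧ constantCoeff (f i) = 0) ∧ x = ∏ i, f i}

/-- The `k`-th Noether number `β_k(G,W)`, the top degree of `S(W)^G/(S(W)₊^G)^{k+1}`. -/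
def noetherK (ρ : Representation F G (α → F)) (k : ℕ) : ℕ :=
  sSup {d | ∃ p, p ∈ invariants ρ ∧ p.IsHomogeneous d ∧ p ∉ prodPow ρ (k+1)}

/-- `β(G)`: the supremum of the Noether numbers over all finite dimensional modules. -/
def noetherSup (F G : Type) [Field F] [Group G] : ℕ∞ :=
  ⨆ (n : ℕ) (ρ : Representation F G (Fin n → F)), (noether ρ : ℕ∞)

/-- `b(G)`: the supremum of `b(G,W)` over all finite dimensional modules. -/
def coinvSup (F G : Type) [Field F] [Group G] : ℕ∞ :=
  ⨆ (n : ℕ) (ρ : Representation F G (Fin n → F)), (coinvTop ρ : ℕ∞)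

/-- `β_k(G)`: the supremum of the `k`-th Noether numbers over all modules. -/
def noetherKSup (F G : Type) [Field F] [Group G] (k : ℕ) : ℕ∞ :=
  ⨆ (n : ℕ) (ρ : Representation F G (Fin n → F)), (noetherK ρ k : ℕ∞)

/-- The linear map `(F^a × F^b) → F^m` assembled from the two summand inclusions,
viewing `F^a × F^b` as functions on the disjoint union of the index sets. -/
noncomputable def sumMap {a b m : ℕ} (f : (Fin a → F) →ₗ[F] (Fin m → F))
    (g : (Fin b → F) →ₗ[F] (Fin m → F)) : ((Fin a ⊕ Fin b) → F) →ₗ[F] (Fin m → F) :=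
  (LinearMap.coprod f g) ∘ₗ
    (LinearEquiv.sumArrowLequivProdArrow (Fin a) (Fin b) F F).toLinearMap

/-- The inclusion `F^a → F^(a+b)` as the first summand. -/
noncomputable def inlHom {a b : ℕ} : (Fin a → F) →ₗ[F] ((Fin a ⊕ Fin b) → F) :=
  (LinearEquiv.sumArrowLequivProdArrow (Fin a) (Fin b) F F).symm.toLinearMap ∘ₗ
    (LinearMap.inl F (Fin a → F) (Fin b → F))

/-- The inclusion `F^b → F^(a+b)` as the second summand. -/
noncomputable def inrHom {a b : ℕ} : (Fin b → F) →ₗ[F] ((Fin a ⊕ Fin b) → F) :=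
  (LinearEquiv.sumArrowLequivProdArrow (Fin a) (Fin b) F F).symm.toLinearMap ∘ₗ
    (LinearMap.inr F (Fin a → F) (Fin b → F))


/-!
Split `S(U ⊕ V)` as polynomials in the `U`-variables with coefficients in `S(V)`. The projection
`π` is `N`-equivariant (with `N` acting on `V` only), so for a positive-degree `G`-invariant `f`
every coefficient of `π f` is `N`-invariant; and `π` followed by setting the `V`-variables to
zero is `G`-equivariant onto `S(U)`, so the constant coefficient of `π f` is `G/N`-invariant.
Conversely, `S(U)^{G/N}` lies in `S(W)^G`, and for `h ∈ S(V)₊^N` the transfer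
`∑_{gN ∈ G/N} g • h` is `G`-invariant with `π`-image `h`, because `π` kills every translate
`g • V` with `g ∉ N`.
-/

section LinearForms

variable {β γ : Type} [Fintype β] [Fintype γ]

theorem lin_eq_linearCombination (w : β → F) :
    lin w = Fintype.linearCombination F (X : β → MvPolynomial β F) w :=
  (Fintype.linearCombination_apply F _ w).symm

theorem constantCoeff_lin (w : β → F) : constantCoeff (lin w) = 0 := by
  simp [lin]

theorem lin_single [DecidableEq β] (i : β) : lin (Pi.single i (1 : F)) = X i := by
  simp [lin_eq_linearCombination]

theorem algOf_X (f : (α → F) →ₗ[F] (β → F)) (j : α) :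
    algOf f (X j) = lin (f (Pi.single j 1)) := by
  simp [algOf, lin]

theorem algOf_lin (f : (α → F) →ₗ[F] (β → F)) (w : α → F) :
    algOf f (lin w) = lin (f w) := by
  conv_rhs => rw [← Finset.univ_sum_single w]
  simp only [lin_eq_linearCombination, Fintype.linearCombination_apply, map_sum, map_smul,
    algOf_X]
  refine Finset.sum_congr rfl fun j _ => ?_
  rw [← mul_one (w j), ← smul_eq_mul, Pi.single_smul', map_smul, Finset.smul_sum]
  simp [smul_smul]

theorem apply_lin_of_comp_algOf_eq {A : Type} [CommSemiring A] [Algebra F A]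
    {Φ : MvPolynomial β F →ₐ[F] A} {f : (α → F) →ₗ[F] (β → F)} {Ψ : MvPolynomial α F →ₐ[F] A}
    (h : Φ.comp (algOf f) = Ψ) (u : α → F) : Φ (lin (f u)) = Ψ (lin u) := by
  rw [← h, AlgHom.comp_apply, algOf_lin]

theorem algOf_comp [DecidableEq β] (f : (β → F) →ₗ[F] (γ → F)) (g : (α → F) →ₗ[F] (β → F)) :
    (algOf f).comp (algOf g) = algOf (f ∘ₗ g) :=
  algHom_ext fun j => by simp [algOf_X, algOf_lin]

theorem algOf_mem_invariants [DecidableEq β] {H : Type} [Group H] {G : Type} [Group G]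
    {ρ : Representation F H (α → F)} {σ : Representation F G (β → F)} {ι : (α → F) →ₗ[F] (β → F)}
    {φ : G → H} (h : ∀ g, σ g ∘ₗ ι = ι ∘ₗ ρ (φ g)) {p : MvPolynomial α F}
    (hp : p ∈ invariants ρ) : algOf ι p ∈ invariants σ := fun g => by
  rw [← AlgHom.comp_apply, algOf_comp, h, ← algOf_comp, AlgHom.comp_apply, hp]

theorem constantCoeff_aeval_eq {σ τ : Type} {R : Type} [CommSemiring R]
    {g : σ → MvPolynomial τ R} (hg : ∀ i, constantCoeff (g i) = 0) (p : MvPolynomial σ R) :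
    constantCoeff (aeval g p) = constantCoeff p := by
  induction p using MvPolynomial.induction_on <;> simp_all

theorem constantCoeff_algOf (f : (α → F) →ₗ[F] (β → F)) (p : MvPolynomial α F) :
    constantCoeff (algOf f p) = constantCoeff p :=
  constantCoeff_aeval_eq (fun _ => by simp) p

theorem algHom_ext_of_iSup_eq_top [DecidableEq β] {A : Type} [CommSemiring A] [Algebra F A]
    {ι : Type} {W : ι → Submodule F (β → F)} (hW : ⨆ i, W i = ⊤)
    {Φ Ψ : MvPolynomial β F →ₐ[F] A} (h : ∀ i, ∀ w ∈ W i, Φ (lin w) = Ψ (lin w)) : Φ = Ψ := by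
  have hlin : Φ.toLinearMap ∘ₗ Fintype.linearCombination F X =
      Ψ.toLinearMap ∘ₗ Fintype.linearCombination F X := by
    refine LinearMap.eqLocus_eq_top.mp (eq_top_iff.mpr ?_)
    exact hW ▸ iSup_le fun i w hw => by simpa [lin_eq_linearCombination] using h i w hw
  refine algHom_ext fun i => ?_
  simpa [lin_single, lin_eq_linearCombination] using LinearMap.congr_fun hlin (Pi.single i 1)

theorem inlHom_single {a b : ℕ} (i : Fin a) :
    inlHom (F := F) (b := b) (Pi.single i 1) = Pi.single (Sum.inl i) 1 := by
  ext (j | j) <;> simp [inlHom, Pi.single_apply]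

theorem inrHom_single {a b : ℕ} (i : Fin b) :
    inrHom (F := F) (a := a) (Pi.single i 1) = Pi.single (Sum.inr i) 1 := by
  ext (j | j) <;> simp [inrHom, Pi.single_apply]

theorem algOf_inlHom {a b : ℕ} : algOf (inlHom (F := F) (a := a) (b := b)) = rename Sum.inl :=
  algHom_ext fun i => by simp [algOf_X, inlHom_single, lin_single]

theorem algOf_inrHom {a b : ℕ} : algOf (inrHom (F := F) (a := a) (b := b)) = rename Sum.inr :=
  algHom_ext fun i => by simp [algOf_X, inrHom_single, lin_single]

end LinearForms

section SumVariables

variable {R : Type} [CommRing R] {σ τ : Type}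

theorem sumAlgEquiv_rename_inl (p : MvPolynomial σ R) :
    sumAlgEquiv R σ τ (rename Sum.inl p) = map C p :=
  AlgHom.congr_fun (sumAlgEquiv_comp_rename_inl R σ τ) p

theorem sumAlgEquiv_rename_inr (q : MvPolynomial τ R) :
    sumAlgEquiv R σ τ (rename Sum.inr q) = C q :=
  AlgHom.congr_fun (sumAlgEquiv_comp_rename_inr R σ τ) q

theorem map_constantCoeff_sumAlgEquiv (p : MvPolynomial (σ ⊕ τ) R) :
    map constantCoeff (sumAlgEquiv R σ τ p) = aeval (Sum.elim X 0) p := by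
  induction p using MvPolynomial.induction_on with
  | C r => simp
  | add p q hp hq => simp_all
  | mul_X p i hp => cases i <;> simp_all

theorem aeval_sumElim_X_zero_rename_inl (p : MvPolynomial σ R) :
    aeval (Sum.elim X 0 : σ ⊕ τ → MvPolynomial σ R) (rename Sum.inl p) = p := by
  rw [aeval_rename, Sum.elim_comp_inl, aeval_X_left_apply]

theorem aeval_sumElim_X_zero_rename_inr (q : MvPolynomial τ R) :
    aeval (Sum.elim X 0 : σ ⊕ τ → MvPolynomial σ R) (rename Sum.inr q) = C (constantCoeff q) := by
  rw [aeval_rename, Sum.elim_comp_inr, aeval_zero, algebraMap_eq]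

theorem mem_span_rename_inr_of_coeff_mem {S : Set (MvPolynomial τ R)}
    {s : MvPolynomial (σ ⊕ τ) R} (h : ∀ μ, coeff μ (sumAlgEquiv R σ τ s) ∈ S) :
    s ∈ Ideal.span (rename Sum.inr '' S) := by
  rw [← (sumAlgEquiv R σ τ).symm_apply_apply s, as_sum (sumAlgEquiv R σ τ s), map_sum]
  refine Ideal.sum_mem _ fun μ _ => ?_
  rw [← mul_one (coeff μ _), ← C_mul_monomial, map_mul]
  refine Ideal.mul_mem_right _ _ (Ideal.subset_span ⟨_, h μ, ?_⟩)
  rw [AlgEquiv.eq_symm_apply, sumAlgEquiv_rename_inr]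

theorem mem_span_of_sumAlgEquiv {A : Subalgebra R (MvPolynomial σ R)}
    {B : Subalgebra R (MvPolynomial τ R)} {r : MvPolynomial (σ ⊕ τ) R}
    (hA : aeval (Sum.elim X 0) r ∈ A) (hB : ∀ μ, coeff μ (sumAlgEquiv R σ τ r) ∈ B)
    (h0 : constantCoeff r = 0) :
    r ∈ Ideal.span (rename Sum.inl '' {p | p ∈ A ∧ constantCoeff p = 0} ∪
      rename Sum.inr '' {q | q ∈ B ∧ constantCoeff q = 0}) := by
  set p₀ : MvPolynomial σ R := aeval (Sum.elim X 0) r with hp₀_def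
  have hp₀ : constantCoeff p₀ = 0 := by
    rw [← h0]
    exact constantCoeff_aeval_eq (g := Sum.elim X 0) (fun i => by cases i <;> simp) r
  -- every coefficient of `r - p₀` over `MvPolynomial τ R` lies in `B` and has no constant term
  rw [← add_sub_cancel (rename Sum.inl p₀) r]
  refine add_mem (Ideal.subset_span (Or.inl ⟨p₀, ⟨hA, hp₀⟩, rfl⟩))
    (Ideal.span_mono Set.subset_union_right (mem_span_rename_inr_of_coeff_mem fun μ => ?_))
  rw [map_sub, sumAlgEquiv_rename_inl, coeff_sub, coeff_map, hp₀_def,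
    ← map_constantCoeff_sumAlgEquiv, coeff_map]
  exact ⟨sub_mem (hB μ) (B.algebraMap_mem _), by simp⟩

end SumVariables

theorem comp_algOf_eq_rename_inl_of_comp_sumMap {a b m : ℕ} {f : (Fin a → F) →ₗ[F] (Fin m → F)}
    {g : (Fin b → F) →ₗ[F] (Fin m → F)}
    {π : MvPolynomial (Fin m) F →ₐ[F] MvPolynomial (Fin a ⊕ Fin b) F}
    (hπ : π.comp (algOf (sumMap f g)) = AlgHom.id F _) :
    π.comp (algOf f) = rename Sum.inl := by
  have : sumMap f g ∘ₗ inlHom = f := LinearMap.ext fun u => by simp [sumMap, inlHom]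
  rw [← this, ← algOf_comp, ← AlgHom.comp_assoc, hπ, AlgHom.id_comp, algOf_inlHom]

theorem comp_algOf_eq_rename_inr_of_comp_sumMap {a b m : ℕ} {f : (Fin a → F) →ₗ[F] (Fin m → F)}
    {g : (Fin b → F) →ₗ[F] (Fin m → F)}
    {π : MvPolynomial (Fin m) F →ₐ[F] MvPolynomial (Fin a ⊕ Fin b) F}
    (hπ : π.comp (algOf (sumMap f g)) = AlgHom.id F _) :
    π.comp (algOf g) = rename Sum.inr := by
  have : sumMap f g ∘ₗ inrHom = g := LinearMap.ext fun v => by simp [sumMap, inrHom]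
  rw [← this, ← algOf_comp, ← AlgHom.comp_assoc, hπ, AlgHom.id_comp, algOf_inrHom]

theorem algHom_ext_of_span_translates {I J K : Type} [Fintype K] [DecidableEq K]
    {σ : Representation F G (K → F)} {ιU : (I → F) →ₗ[F] (K → F)} {ιV : (J → F) →ₗ[F] (K → F)}
    {C : Set G} (hspan : (⨆ o : Option C,
      Option.elim o (LinearMap.range ιU) (fun c => (LinearMap.range ιV).map (σ c.1))) = ⊤)
    {A : Type} [CommSemiring A] [Algebra F A] {Φ Ψ : MvPolynomial K F →ₐ[F] A}
    (hU : ∀ u, Φ (lin (ιU u)) = Ψ (lin (ιU u)))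
    (hV : ∀ x v, Φ (lin (σ x (ιV v))) = Ψ (lin (σ x (ιV v)))) : Φ = Ψ := by
  refine algHom_ext_of_iSup_eq_top hspan ?_
  rintro (_ | c) w hw
  · obtain ⟨u, rfl⟩ := hw
    exact hU u
  · obtain ⟨-, ⟨v, rfl⟩, rfl⟩ := hw
    exact hV c v

section Induced

variable {N : Subgroup G} {nU nV m : ℕ} {σ : Representation F G (Fin m → F)}
  {ρV : Representation F N (Fin nV → F)} {ιU : (Fin nU → F) →ₗ[F] (Fin m → F)}
  {ιV : (Fin nV → F) →ₗ[F] (Fin m → F)}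
  {π : MvPolynomial (Fin m) F →ₐ[F] MvPolynomial (Fin nU ⊕ Fin nV) F} {C : Set G}

theorem apply_lin_translate_eq_zero (hC : Subgroup.IsComplement C (N : Set G))
    (hV : ∀ n : N, σ n ∘ₗ ιV = ιV ∘ₗ ρV n)
    (hπ : ∀ c ∈ C, c ∉ N → ∀ v, π (lin (σ c (ιV v))) = 0) {x : G} (hx : x ∉ N) (v : Fin nV → F) :
    π (lin (σ x (ιV v))) = 0 := by
  set c := hC.equiv x |>.1
  set n := hC.equiv x |>.2
  have hcn : (c : G) * n = x := hC.equiv_fst_mul_equiv_snd x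
  have hc : (c : G) ∉ N := fun hc => hx (hcn ▸ N.mul_mem hc n.2)
  rw [← hcn, map_mul, Module.End.mul_apply, ← LinearMap.comp_apply (σ n), hV ⟨n, n.2⟩]
  exact hπ c c.2 hc _

theorem apply_lin_translate_of_mem (hV : ∀ n : N, σ n ∘ₗ ιV = ιV ∘ₗ ρV n)
    (hπV : π.comp (algOf ιV) = rename Sum.inr) (n : N) (v : Fin nV → F) :
    π (lin (σ n (ιV v))) = rename Sum.inr (lin (ρV n v)) := by
  rw [← LinearMap.comp_apply, hV, LinearMap.comp_apply, apply_lin_of_comp_algOf_eq hπV]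

theorem exists_apply_lin_translate_eq_rename_inr
    (hπN : ∀ (n : N) v, π (lin (σ n (ιV v))) = rename Sum.inr (lin (ρV n v)))
    (hπ0 : ∀ x ∉ N, ∀ v, π (lin (σ x (ιV v))) = 0)
    (x : G) (v : Fin nV → F) : ∃ w, π (lin (σ x (ιV v))) = rename Sum.inr (lin w) := by
  by_cases hx : x ∈ N
  · exact ⟨_, hπN ⟨x, hx⟩ v⟩
  · exact ⟨0, by rw [hπ0 x hx, lin_eq_linearCombination, map_zero, map_zero]⟩

theorem apply_algOf_translate_eq_zero (hπ0 : ∀ x ∉ N, ∀ v, π (lin (σ x (ιV v))) = 0) {x : G}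
    (hx : x ∉ N) {p : MvPolynomial (Fin nV) F} (hp0 : constantCoeff p = 0) :
    π (algOf (σ x ∘ₗ ιV) p) = 0 := by
  have h : π.comp (algOf (σ x ∘ₗ ιV)) = aeval fun _ => 0 :=
    algHom_ext fun j => by simp [algOf_X, hπ0 x hx]
  rw [← AlgHom.comp_apply, h, aeval_zero', hp0, map_zero]

theorem algOf_translate_eq_of_mk_eq (hV : ∀ n : N, σ n ∘ₗ ιV = ιV ∘ₗ ρV n)
    {p : MvPolynomial (Fin nV) F} (hp : p ∈ invariants ρV) {x y : G}
    (hxy : (x : G ⧸ N) = y) : algOf (σ x ∘ₗ ιV) p = algOf (σ y ∘ₗ ιV) p := by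
  have hn : x⁻¹ * y ∈ N := QuotientGroup.eq.1 hxy
  have hy : σ y ∘ₗ ιV = (σ x ∘ₗ ιV) ∘ₗ ρV ⟨_, hn⟩ := by
    rw [LinearMap.comp_assoc, ← hV, ← LinearMap.comp_assoc, ← Module.End.mul_eq_comp, ← map_mul]
    simp
  rw [hy, ← algOf_comp (σ x ∘ₗ ιV), AlgHom.comp_apply, hp]

theorem exists_invariant_apply_eq_rename_inr [Finite G] (hV : ∀ n : N, σ n ∘ₗ ιV = ιV ∘ₗ ρV n)
    (hπV : π.comp (algOf ιV) = rename Sum.inr) (hπ0 : ∀ x ∉ N, ∀ v, π (lin (σ x (ιV v))) = 0)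
    {p : MvPolynomial (Fin nV) F} (hp : p ∈ invariants ρV) (hp0 : constantCoeff p = 0) :
    ∃ q, (q ∈ invariants σ ∧ constantCoeff q = 0) ∧ π q = rename Sum.inr p := by
  classical
  have : Fintype (G ⧸ N) := Fintype.ofFinite _
  refine ⟨∑ y : G ⧸ N, algOf (σ y.out ∘ₗ ιV) p, ⟨fun g => ?_, ?_⟩, ?_⟩
  · rw [map_sum]
    refine Fintype.sum_equiv (MulAction.toPerm g) _ _ fun y => ?_
    rw [← AlgHom.comp_apply, algOf_comp, ← LinearMap.comp_assoc, ← Module.End.mul_eq_comp,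
      ← map_mul]
    refine algOf_translate_eq_of_mk_eq hV hp ?_
    rw [MulAction.toPerm_apply, QuotientGroup.out_eq']
    conv_rhs => rw [← QuotientGroup.out_eq' y]
    rfl
  · simp [constantCoeff_algOf, hp0]
  · -- only the summand of the trivial coset survives `π`
    have hout : ∀ y : G ⧸ N, y ≠ ((1 : G) : G ⧸ N) → y.out ∉ N := fun y hy hN =>
      hy (by rw [← QuotientGroup.out_eq' y]; exact QuotientGroup.eq.2 (by simpa using hN))
    rw [map_sum, Finset.sum_eq_single_of_mem _ (Finset.mem_univ _) fun y _ hy =>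
      apply_algOf_translate_eq_zero hπ0 (hout y hy) hp0,
      algOf_translate_eq_of_mk_eq hV hp (QuotientGroup.out_eq' _), map_one, Module.End.one_eq_id,
      LinearMap.id_comp, ← AlgHom.comp_apply, hπV]

theorem constantCoeff_apply_eq (hspan : (⨆ o : Option C,
      Option.elim o (LinearMap.range ιU) (fun c => (LinearMap.range ιV).map (σ c.1))) = ⊤)
    (hπU : π.comp (algOf ιU) = rename Sum.inl)
    (hπN : ∀ (n : N) v, π (lin (σ n (ιV v))) = rename Sum.inr (lin (ρV n v)))
    (hπ0 : ∀ x ∉ N, ∀ v, π (lin (σ x (ιV v))) = 0) (p : MvPolynomial (Fin m) F) :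
    constantCoeff (π p) = constantCoeff p := by
  have h : (aeval fun _ => (0 : F)).comp π = aeval fun _ => 0 := by
    refine algHom_ext_of_span_translates hspan (fun u => ?_) (fun x v => ?_)
    · simp [apply_lin_of_comp_algOf_eq hπU, constantCoeff_lin]
    · obtain ⟨w, hw⟩ := exists_apply_lin_translate_eq_rename_inr hπN hπ0 x v
      simp [hw, constantCoeff_lin]
  simpa using AlgHom.congr_fun h p

theorem coeff_sumAlgEquiv_apply_mem_invariants (hspan : (⨆ o : Option C,
      Option.elim o (LinearMap.range ιU) (fun c => (LinearMap.range ιV).map (σ c.1))) = ⊤)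
    (hUN : ∀ n : N, σ n ∘ₗ ιU = ιU) (hπU : π.comp (algOf ιU) = rename Sum.inl)
    (hπN : ∀ (n : N) v, π (lin (σ n (ιV v))) = rename Sum.inr (lin (ρV n v)))
    (hπ0 : ∀ x ∉ N, ∀ v, π (lin (σ x (ιV v))) = 0) {p : MvPolynomial (Fin m) F}
    (hp : p ∈ invariants σ) (μ : Fin nU →₀ ℕ) :
    coeff μ (sumAlgEquiv F _ _ (π p)) ∈ invariants ρV := by
  intro n
  have hequiv : (sumAlgEquiv F _ _).toAlgHom.comp (π.comp (algOf (σ n))) =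
      (mapAlgHom (algOf (ρV n))).comp ((sumAlgEquiv F _ _).toAlgHom.comp π) := by
    refine algHom_ext_of_span_translates hspan (fun u => ?_) (fun x v => ?_)
    · have hσ : σ n (ιU u) = ιU u := LinearMap.congr_fun (hUN n) u
      simp only [AlgHom.comp_apply, algOf_lin, hσ, apply_lin_of_comp_algOf_eq hπU, mapAlgHom_apply,
        AlgEquiv.coe_toAlgHom, sumAlgEquiv_rename_inl, map_map]
      refine congrArg (fun f => map f (lin u)) (RingHom.ext fun r => ?_)
      simp
    · simp only [AlgHom.comp_apply, algOf_lin, mapAlgHom_apply, AlgEquiv.coe_toAlgHom]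
      by_cases hx : x ∈ N
      · have hσ : σ n (σ x (ιV v)) = σ (n * ⟨x, hx⟩ : N) (ιV v) := by simp
        rw [hσ, hπN, hπN ⟨x, hx⟩, sumAlgEquiv_rename_inr, sumAlgEquiv_rename_inr, map_C,
          RingHom.coe_coe, algOf_lin, map_mul, Module.End.mul_apply]
      · have hnx : (n : G) * x ∉ N := fun h => hx (by simpa using N.mul_mem (N.inv_mem n.2) h)
        rw [← Module.End.mul_apply, ← map_mul, hπ0 _ hnx, hπ0 x hx, map_zero, map_zero]
  have h := AlgHom.congr_fun hequiv p
  simp only [AlgHom.comp_apply, hp n, mapAlgHom_apply] at h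
  have hμ := congrArg (coeff μ) h.symm
  rwa [coeff_map] at hμ

section Quotient

variable [N.Normal] {ρU : Representation F (G ⧸ N) (Fin nU → F)}

theorem aeval_apply_mem_invariants (hspan : (⨆ o : Option C,
      Option.elim o (LinearMap.range ιU) (fun c => (LinearMap.range ιV).map (σ c.1))) = ⊤)
    (hU : ∀ g : G, σ g ∘ₗ ιU = ιU ∘ₗ ρU g) (hπU : π.comp (algOf ιU) = rename Sum.inl)
    (hπN : ∀ (n : N) v, π (lin (σ n (ιV v))) = rename Sum.inr (lin (ρV n v)))
    (hπ0 : ∀ x ∉ N, ∀ v, π (lin (σ x (ιV v))) = 0) {p : MvPolynomial (Fin m) F}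
    (hp : p ∈ invariants σ) :
    aeval (Sum.elim X 0) (π p) ∈ invariants ρU := by
  intro g'
  obtain ⟨g, rfl⟩ := QuotientGroup.mk_surjective g'
  let P : MvPolynomial (Fin m) F →ₐ[F] MvPolynomial (Fin nU) F := (aeval (Sum.elim X 0)).comp π
  have hP : ∀ x v, P (lin (σ x (ιV v))) = 0 := fun x v => by
    obtain ⟨w, hw⟩ := exists_apply_lin_translate_eq_rename_inr hπN hπ0 x v
    rw [AlgHom.comp_apply, hw, aeval_sumElim_X_zero_rename_inr, constantCoeff_lin, map_zero]
  have hequiv : P.comp (algOf (σ g)) = (algOf (ρU g)).comp P := by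
    refine algHom_ext_of_span_translates hspan (fun u => ?_) (fun x v => ?_)
    · simp only [P, AlgHom.comp_apply, algOf_lin]
      rw [← LinearMap.comp_apply, hU g, LinearMap.comp_apply, apply_lin_of_comp_algOf_eq hπU,
        apply_lin_of_comp_algOf_eq hπU, aeval_sumElim_X_zero_rename_inl,
        aeval_sumElim_X_zero_rename_inl, algOf_lin]
    · change P (algOf (σ g) _) = algOf (ρU g) (P _)
      rw [algOf_lin, ← Module.End.mul_apply, ← map_mul, hP, hP, map_zero]
  simpa [P, hp g] using (AlgHom.congr_fun hequiv p).symm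

end Quotient

end Induced

theorem stmt14_general
    {G : Type} [Group G] [Fintype G]
    (N : Subgroup G) [N.Normal] {nU nV m : ℕ}
    (ρU : Representation F (G ⧸ N) (Fin nU → F))
    (ρV : Representation F N (Fin nV → F))
    (σ : Representation F G (Fin m → F))
    (ιU : (Fin nU → F) →ₗ[F] (Fin m → F))
    (ιV : (Fin nV → F) →ₗ[F] (Fin m → F))
    (hU : ∀ g : G, σ g ∘ₗ ιU = ιU ∘ₗ ρU (QuotientGroup.mk g))
    (hV : ∀ x : N, σ x ∘ₗ ιV = ιV ∘ₗ ρV x)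
    (C : Set G) (hC : Subgroup.IsComplement C (N : Set G))
    (hspan : (⨆ o : Option C,
      Option.elim o (LinearMap.range ιU) (fun c => (LinearMap.range ιV).map (σ c.1))) = ⊤)
    (π : MvPolynomial (Fin m) F →ₐ[F] MvPolynomial (Fin nU ⊕ Fin nV) F)
    (hπ1 : π.comp (algOf (sumMap ιU ιV)) = AlgHom.id F (MvPolynomial (Fin nU ⊕ Fin nV) F))
    (hπ2 : ∀ c ∈ C, c ∉ N → ∀ v : Fin nV → F, π (lin (σ c (ιV v))) = 0) :
    (hilbertIdeal σ).map π = Ideal.span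
      ((algOf (inlHom (F := F) (a := nU) (b := nV)) ''
          {p | p ∈ invariants ρU ∧ MvPolynomial.constantCoeff p = 0}) ∪
        (algOf (inrHom (F := F) (a := nU) (b := nV)) ''
          {p | p ∈ invariants ρV ∧ MvPolynomial.constantCoeff p = 0})) := by
  have hπU := comp_algOf_eq_rename_inl_of_comp_sumMap hπ1
  have hπV := comp_algOf_eq_rename_inr_of_comp_sumMap hπ1
  have hπN := apply_lin_translate_of_mem hV hπV
  have hπ0 : ∀ x ∉ N, ∀ v, π (lin (σ x (ιV v))) = 0 := fun x hx =>
    apply_lin_translate_eq_zero hC hV hπ2 hx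
  have hUN : ∀ n : N, σ n ∘ₗ ιU = ιU := fun n => by
    rw [hU, (QuotientGroup.eq_one_iff _).2 n.2, map_one, Module.End.one_eq_id, LinearMap.comp_id]
  rw [algOf_inlHom, algOf_inrHom, hilbertIdeal, Ideal.map_span]
  refine le_antisymm (Ideal.span_le.2 ?_) (Ideal.span_le.2 ?_)
  · rintro _ ⟨p, ⟨hp, hp0⟩, rfl⟩
    refine mem_span_of_sumAlgEquiv (aeval_apply_mem_invariants hspan hU hπU hπN hπ0 hp)
      (coeff_sumAlgEquiv_apply_mem_invariants hspan hUN hπU hπN hπ0 hp) ?_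
    rw [constantCoeff_apply_eq hspan hπU hπN hπ0, hp0]
  · rintro _ (⟨p, ⟨hp, hp0⟩, rfl⟩ | ⟨p, ⟨hp, hp0⟩, rfl⟩)
    · refine Ideal.subset_span ⟨algOf ιU p, ⟨algOf_mem_invariants hU hp, ?_⟩, ?_⟩
      · rw [constantCoeff_algOf, hp0]
      · rw [← AlgHom.comp_apply, hπU]
    · obtain ⟨q, hq, hπq⟩ := exists_invariant_apply_eq_rename_inr hV hπV hπ0 hp hp0
      exact Ideal.subset_span ⟨q, hq, hπq⟩

/-- for `W = U ⊕ Ind_N^G V`, the image of the Hilbert ideal of `S(W)`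
under the natural projection `π : S(W) → S(U ⊕ V)` is the ideal generated by
`S(U)₊^(G/N)` and `S(V)₊^N`. -/
theorem stmt14
    {G : Type} [Group G] [Fintype G]
    (hchar : (Fintype.card G : F) ≠ 0)
    (N : Subgroup G) [N.Normal] {nU nV m : ℕ}
    (ρU : Representation F (G ⧸ N) (Fin nU → F))
    (ρV : Representation F N (Fin nV → F))
    (σ : Representation F G (Fin m → F))
    (ιU : (Fin nU → F) →ₗ[F] (Fin m → F)) (hιU : Function.Injective ιU)
    (ιV : (Fin nV → F) →ₗ[F] (Fin m → F)) (hιV : Function.Injective ιV)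
    (hU : ∀ g : G, σ g ∘ₗ ιU = ιU ∘ₗ ρU (QuotientGroup.mk g))
    (hV : ∀ x : N, σ x ∘ₗ ιV = ιV ∘ₗ ρV x)
    (C : Set G) (hC : Subgroup.IsComplement C (N : Set G)) (h1 : (1:G) ∈ C)
    (hindep : iSupIndep fun o : Option C =>
      Option.elim o (LinearMap.range ιU) (fun c => (LinearMap.range ιV).map (σ c.1)))
    (hspan : (⨆ o : Option C,
      Option.elim o (LinearMap.range ιU) (fun c => (LinearMap.range ιV).map (σ c.1))) = ⊤)
    (π : MvPolynomial (Fin m) F →ₐ[F] MvPolynomial (Fin nU ⊕ Fin nV) F)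
    (hπ1 : π.comp (algOf (sumMap ιU ιV)) = AlgHom.id F (MvPolynomial (Fin nU ⊕ Fin nV) F))
    (hπ2 : ∀ c ∈ C, c ∉ N → ∀ v : Fin nV → F, π (lin (σ c (ιV v))) = 0) :
    (hilbertIdeal σ).map π = Ideal.span
      ((algOf (inlHom (F := F) (a := nU) (b := nV)) ''
          {p | p ∈ invariants ρU ∧ MvPolynomial.constantCoeff p = 0}) ∪
        (algOf (inrHom (F := F) (a := nU) (b := nV)) ''
          {p | p ∈ invariants ρV ∧ MvPolynomial.constantCoeff p = 0})) :=
  stmt14_general N ρU ρV σ ιU ιV hU hV C hC hspan π hπ1 hπ2
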